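/- For the two-particle Calogero–Moser system, the variables P₁ = (1/2)(p₁+p₂), P₂ = (1/4)ln((p₁−p₂)² + 4g²/(q₁−q₂)²), Q₁ = q₁+q₂, Q₂ = (q₁−q₂)(p₁−p₂) satisfy the canonical relations {Q₁,Q₂} = {P₁,P₂} = 0 and {Q_i,P_j} = δ_{ij}, on the region where q₁ ≠ q₂ and g ≠ 0. -/

import Mathlib

/-!
The Poisson bracket only sees the gradients, so everything reduces to computing the gradients of
the four functions. `Q₁` and `P₁` have gradients along the centre-of-mass direction `(1, 1)`,
while `Q₂` and `P₂` are functions of the relative coordinates `q = q₁ - q₂`, `p = p₁ - p₂` only,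
with gradients along `(1, -1)`; the two directions are symplectically orthogonal, which kills the
mixed brackets. The one nontrivial bracket is, with `u = p² + 4g²/q²` and `P₂ = ¼ log u`,
`{Q₂, P₂} = 2 (p ∂ₚP₂ - q ∂_qP₂) = (p² + 4g²/q²) / u = 1`.
-/

open Real

abbrev Phase2 := (Fin 2 → ℝ) × (Fin 2 → ℝ)

/-- Poisson bracket on `ℝ⁴` with coordinates `(q₁,q₂,p₁,p₂)`. -/
noncomputable def poisson (F G : Phase2 → ℝ) (x : Phase2) : ℝ :=
  ∑ i : Fin 2,
    (fderiv ℝ F x (Pi.single i 1, 0) * fderiv ℝ G x (0, Pi.single i 1)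
      - fderiv ℝ G x (Pi.single i 1, 0) * fderiv ℝ F x (0, Pi.single i 1))

namespace Phase2

noncomputable def covector (a b : Fin 2 → ℝ) : Phase2 →L[ℝ] ℝ :=
  ∑ i, (a i • (ContinuousLinearMap.proj i).comp (ContinuousLinearMap.fst ℝ _ _)
    + b i • (ContinuousLinearMap.proj i).comp (ContinuousLinearMap.snd ℝ _ _))

@[simp] theorem covector_apply (a b : Fin 2 → ℝ) (v : Phase2) :
    covector a b v = ∑ i, (a i * v.1 i + b i * v.2 i) := by
  simp [covector]

theorem poisson_eq_of_hasFDerivAt {F G : Phase2 → ℝ} {x : Phase2} {a b c d : Fin 2 → ℝ}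
    (hF : HasFDerivAt F (covector a b) x) (hG : HasFDerivAt G (covector c d) x) :
    poisson F G x = ∑ i, (a i * d i - c i * b i) := by
  simp [poisson, hF.fderiv, hG.fderiv, Fin.sum_univ_two, Pi.single_apply]

def relQ (y : Phase2) : ℝ := y.1 0 - y.1 1

def relP (y : Phase2) : ℝ := y.2 0 - y.2 1

/-- Four times the relative energy: the Calogero–Moser Hamiltonian
`(p₁² + p₂²)/2 + g²/(q₁ - q₂)²` equals `((p₁ + p₂)/2)² + relEnergy g / 4`. -/
noncomputable def relEnergy (g : ℝ) (y : Phase2) : ℝ := relP y ^ 2 + 4 * g ^ 2 / relQ y ^ 2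

variable {x : Phase2}

theorem relEnergy_pos {g : ℝ} (hg : g ≠ 0) (hx : relQ x ≠ 0) : 0 < relEnergy g x := by
  unfold relEnergy
  positivity

theorem hasFDerivAt_fst_add :
    HasFDerivAt (fun y : Phase2 => y.1 0 + y.1 1) (covector ![1, 1] 0) x :=
  (covector ![1, 1] 0).hasFDerivAt.congr_of_eventuallyEq <| .of_forall fun y => by
    simp [Fin.sum_univ_two]

theorem hasFDerivAt_half_snd_add :
    HasFDerivAt (fun y : Phase2 => 1 / 2 * (y.2 0 + y.2 1)) (covector 0 ![1 / 2, 1 / 2]) x :=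
  (covector 0 ![1 / 2, 1 / 2]).hasFDerivAt.congr_of_eventuallyEq <| .of_forall fun y => by
    simp [Fin.sum_univ_two]
    ring

theorem hasFDerivAt_relQ : HasFDerivAt relQ (covector ![1, -1] 0) x :=
  (covector ![1, -1] 0).hasFDerivAt.congr_of_eventuallyEq <| .of_forall fun y => by
    simp [relQ, Fin.sum_univ_two]
    ring

theorem hasFDerivAt_relP : HasFDerivAt relP (covector 0 ![1, -1]) x :=
  (covector 0 ![1, -1]).hasFDerivAt.congr_of_eventuallyEq <| .of_forall fun y => by
    simp [relP, Fin.sum_univ_two]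
    ring

theorem hasFDerivAt_relQ_mul_relP :
    HasFDerivAt (fun y => relQ y * relP y) (covector ![relP x, -relP x] ![relQ x, -relQ x]) x :=
  (hasFDerivAt_relQ.mul hasFDerivAt_relP).congr_fderiv <| by
    ext v <;> simp [Fin.sum_univ_two] <;> ring

theorem hasFDerivAt_relEnergy (g : ℝ) (hx : relQ x ≠ 0) :
    HasFDerivAt (relEnergy g)
      (covector ![-8 * g ^ 2 / relQ x ^ 3, 8 * g ^ 2 / relQ x ^ 3] ![2 * relP x, -2 * relP x]) x := by
  have hpot := ((hasDerivAt_const (relQ x) (4 * g ^ 2)).div (hasDerivAt_pow 2 (relQ x))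
    (pow_ne_zero 2 hx)).comp_hasFDerivAt x hasFDerivAt_relQ
  refine ((hasFDerivAt_relP.pow 2).add hpot).congr_fderiv ?_
  ext v
  · simp [Fin.sum_univ_two]
    field_simp
    ring
  · simp [Fin.sum_univ_two]
    ring

theorem hasFDerivAt_log_relEnergy (g : ℝ) (hx : relQ x ≠ 0) (hu : relEnergy g x ≠ 0) :
    HasFDerivAt (fun y => 1 / 4 * Real.log (relEnergy g y))
      (covector
        ![-2 * g ^ 2 / (relQ x ^ 3 * relEnergy g x), 2 * g ^ 2 / (relQ x ^ 3 * relEnergy g x)]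
        ![relP x / (2 * relEnergy g x), -relP x / (2 * relEnergy g x)]) x :=
  (((hasFDerivAt_relEnergy g hx).log hu).const_mul (1 / 4)).congr_fderiv <| by
    ext v <;> simp [Fin.sum_univ_two] <;> field_simp <;> ring

end Phase2

open Phase2

/-- The action–angle variables of the two-particle Calogero–Moser system
satisfy the canonical relations on the region `q₁ ≠ q₂`, `g ≠ 0`. -/
theorem stmt_14 (g : ℝ) (hg : g ≠ 0) (P₁ P₂ Q₁ Q₂ : Phase2 → ℝ)
    (hP₁def : P₁ = fun x => 1 / 2 * (x.2 0 + x.2 1))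
    (hP₂def : P₂ = fun x => 1 / 4 * Real.log
      ((x.2 0 - x.2 1) ^ 2 + 4 * g ^ 2 / (x.1 0 - x.1 1) ^ 2))
    (hQ₁def : Q₁ = fun x => x.1 0 + x.1 1)
    (hQ₂def : Q₂ = fun x => (x.1 0 - x.1 1) * (x.2 0 - x.2 1)) :
    ∀ x : Phase2, x.1 0 ≠ x.1 1 →
      poisson Q₁ Q₂ x = 0 ∧ poisson P₁ P₂ x = 0 ∧
      poisson Q₁ P₁ x = 1 ∧ poisson Q₂ P₂ x = 1 ∧
      poisson Q₁ P₂ x = 0 ∧ poisson Q₂ P₁ x = 0 := by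
  intro x hx
  have hq : relQ x ≠ 0 := sub_ne_zero.mpr hx
  have hu := relEnergy_pos hg hq
  have hQ₁ : HasFDerivAt Q₁ _ x := hQ₁def ▸ hasFDerivAt_fst_add
  have hP₁ : HasFDerivAt P₁ _ x := hP₁def ▸ hasFDerivAt_half_snd_add
  have hQ₂ : HasFDerivAt Q₂ _ x := hQ₂def ▸ hasFDerivAt_relQ_mul_relP
  have hP₂ : HasFDerivAt P₂ _ x := hP₂def ▸ hasFDerivAt_log_relEnergy g hq hu.ne'
  simp only [poisson_eq_of_hasFDerivAt hQ₁ hQ₂, poisson_eq_of_hasFDerivAt hP₁ hP₂,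
    poisson_eq_of_hasFDerivAt hQ₁ hP₁, poisson_eq_of_hasFDerivAt hQ₂ hP₂,
    poisson_eq_of_hasFDerivAt hQ₁ hP₂, poisson_eq_of_hasFDerivAt hQ₂ hP₁]
  rw [relEnergy] at hu ⊢
  refine ⟨?_, ?_, ?_, ?_, ?_, ?_⟩ <;> simp [Fin.sum_univ_two] <;> field_simp <;> ring
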